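/- Pullback of quasi-measures: if q is an image-transformation from X to Y and μ is a quasi-measure on Y, then q*μ := μ ∘ q is a quasi-measure on X. Moreover, if σ is simple then q*σ is simple, and the adjoint is anti-multiplicative: (p ∘ q)* = q* ∘ p* for composable image-transformations. -/

import Mathlib

open Set MeasureTheory BoundedContinuousFunction Filter Topology

/-- An *image* is a set that is either open or closed. -/
def IsImage {X : Type*} [TopologicalSpace X] (A : Set X) : Prop := IsOpen A ∨ IsClosed A

/-- A (normalized, additive, compact-regular) quasi-measure on the images of `X`. -/
structure IsQuasiMeasure {X : Type*} [TopologicalSpace X] (μ : Set X → ℝ) : Prop where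
  nonneg : ∀ A : Set X, IsImage A → 0 ≤ μ A
  normalized : μ Set.univ = 1
  additive : ∀ A B : Set X, IsImage A → IsImage B → IsImage (A ∪ B) → Disjoint A B →
    μ (A ∪ B) = μ A + μ B
  regular : ∀ U : Set X, IsOpen U →
    IsLUB {r : ℝ | ∃ K : Set X, IsCompact K ∧ K ⊆ U ∧ μ K = r} (μ U)

/-- A quasi-measure is simple if it only takes the values 0 and 1. -/
def IsSimpleQM {X : Type*} [TopologicalSpace X] (μ : Set X → ℝ) : Prop :=
  ∀ A : Set X, IsImage A → μ A = 0 ∨ μ A = 1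

/-- Membership in the singly generated algebra `A(c) = {φ ∘ c : φ ∈ C(ℝ,ℝ)}`. -/
def InAlg {X : Type*} [TopologicalSpace X] (c f : X →ᵇ ℝ) : Prop :=
  ∃ φ : C(ℝ, ℝ), ∀ x, f x = φ (c x)

-- The quasi-integral of `a` with respect to `μ`: `∫ t dμ_a(t)` where `μ_a`
-- is the Borel probability measure extending `μ ∘ a⁻¹` (if it exists).
open Classical in
noncomputable def qint {X : Type*} [TopologicalSpace X] (μ : Set X → ℝ) (a : X →ᵇ ℝ) : ℝ :=
  if h : ∃ ν : MeasureTheory.Measure ℝ, MeasureTheory.IsProbabilityMeasure ν ∧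
      ∀ A : Set ℝ, IsImage A → ν A = ENNReal.ofReal (μ (a ⁻¹' A))
  then ∫ t, t ∂ h.choose else 0

/-- An image-transformation from `X` to `Y`. -/
structure IsImageTransformation {X Y : Type*} [TopologicalSpace X] [TopologicalSpace Y]
    (q : Set X → Set Y) : Prop where
  image : ∀ A : Set X, IsImage A → IsImage (q A)
  top : q Set.univ = Set.univ
  openMap : ∀ U : Set X, IsOpen U → IsOpen (q U)
  additive : ∀ A B : Set X, IsImage A → IsImage B → IsImage (A ∪ B) → Disjoint A B →
    q (A ∪ B) = q A ∪ q B ∧ Disjoint (q A) (q B)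
  regular : ∀ U : Set X, IsOpen U → ∀ K : Set Y, IsCompact K → K ⊆ q U →
    ∃ L : Set X, IsCompact L ∧ L ⊆ U ∧ K ⊆ q L

/-! Every axiom of a quasi-measure passes along `q`. Positivity, normalization and additivity
transfer directly. For inner regularity, `q` is monotone along compact subsets of open sets, and
any compact `K ⊆ q U` is covered by some `q L` with `L ⊆ U` compact; since a quasi-measure is
monotone on images, `μ (q U)` is still the supremum of `μ (q L)`. -/

namespace IsQuasiMeasure

variable {X : Type*} [TopologicalSpace X] {μ : Set X → ℝ}

theorem le_of_diff (hμ : IsQuasiMeasure μ) {A B : Set X} (hAB : A ⊆ B) (hA : IsImage A)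
    (hBA : IsImage (B \ A)) (hB : IsImage B) : μ A ≤ μ B := by
  have hunion : A ∪ B \ A = B := union_sdiff_cancel hAB
  have hsum := hμ.additive A (B \ A) hA hBA (by rwa [hunion]) disjoint_sdiff_right
  rw [hunion] at hsum
  linarith [hμ.nonneg _ hBA]

theorem add_compl (hμ : IsQuasiMeasure μ) {A : Set X} (hA : IsImage A) : μ A + μ Aᶜ = 1 := by
  have hAc : IsImage Aᶜ := hA.symm.imp isOpen_compl_iff.2 isClosed_compl_iff.2
  rw [← hμ.normalized, ← union_compl_self A]
  exact (hμ.additive A Aᶜ hA hAc (by simp [IsImage]) disjoint_compl_right).symm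

variable [T2Space X]

theorem mono_open (hμ : IsQuasiMeasure μ) {U V : Set X} (hU : IsOpen U) (hV : IsOpen V)
    (hUV : U ⊆ V) : μ U ≤ μ V := by
  refine (hμ.regular U hU).2 ?_
  rintro _ ⟨K, hK, hKU, rfl⟩
  exact hμ.le_of_diff (hKU.trans hUV) (Or.inr hK.isClosed) (Or.inl (hV.sdiff hK.isClosed))
    (Or.inl hV)

theorem mono_closed (hμ : IsQuasiMeasure μ) {F G : Set X} (hF : IsClosed F) (hG : IsClosed G)
    (hFG : F ⊆ G) : μ F ≤ μ G := by
  have hcompl := hμ.mono_open hG.isOpen_compl hF.isOpen_compl (compl_subset_compl.2 hFG)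
  linarith [hμ.add_compl (Or.inr hF), hμ.add_compl (Or.inr hG)]

theorem mono (hμ : IsQuasiMeasure μ) {A B : Set X} (hA : IsImage A) (hB : IsImage B)
    (hAB : A ⊆ B) : μ A ≤ μ B := by
  rcases hA with hA | hA <;> rcases hB with hB | hB
  · exact hμ.mono_open hA hB hAB
  · exact hμ.le_of_diff hAB (Or.inl hA) (Or.inr (hB.sdiff hA)) (Or.inr hB)
  · exact hμ.le_of_diff hAB (Or.inr hA) (Or.inl (hB.sdiff hA)) (Or.inl hB)
  · exact hμ.mono_closed hA hB hAB

end IsQuasiMeasure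

namespace IsImageTransformation

variable {X Y : Type*} [TopologicalSpace X] [TopologicalSpace Y] {q : Set X → Set Y}

theorem subset_of_diff (hq : IsImageTransformation q) {A B : Set X} (hAB : A ⊆ B)
    (hA : IsImage A) (hBA : IsImage (B \ A)) (hB : IsImage B) : q A ⊆ q B := by
  have hunion : A ∪ B \ A = B := union_sdiff_cancel hAB
  have hsplit := (hq.additive A (B \ A) hA hBA (by rwa [hunion]) disjoint_sdiff_right).1
  rw [hunion] at hsplit
  exact hsplit ▸ subset_union_left

variable [T2Space X] [T2Space Y] {μ : Set Y → ℝ}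

theorem isLUB_pullback (hq : IsImageTransformation q) (hμ : IsQuasiMeasure μ) {U : Set X}
    (hU : IsOpen U) :
    IsLUB {r : ℝ | ∃ K : Set X, IsCompact K ∧ K ⊆ U ∧ μ (q K) = r} (μ (q U)) := by
  constructor
  · rintro _ ⟨K, hK, hKU, rfl⟩
    have hK' : IsImage K := Or.inr hK.isClosed
    have hqKU := hq.subset_of_diff hKU hK' (Or.inl (hU.sdiff hK.isClosed)) (Or.inl hU)
    exact hμ.mono (hq.image K hK') (Or.inl (hq.openMap U hU)) hqKU
  · intro b hb
    refine (hμ.regular (q U) (hq.openMap U hU)).2 ?_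
    rintro _ ⟨K, hK, hKU, rfl⟩
    obtain ⟨L, hL, hLU, hKL⟩ := hq.regular U hU K hK hKU
    calc μ K ≤ μ (q L) := hμ.mono (Or.inr hK.isClosed) (hq.image L (Or.inr hL.isClosed)) hKL
      _ ≤ b := hb ⟨L, hL, hLU, rfl⟩

theorem isQuasiMeasure_pullback (hq : IsImageTransformation q) (hμ : IsQuasiMeasure μ) :
    IsQuasiMeasure fun A => μ (q A) where
  nonneg A hA := hμ.nonneg (q A) (hq.image A hA)
  normalized := hq.top ▸ hμ.normalized
  additive A B hA hB hAB hdisj := by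
    obtain ⟨hunion, hdisj'⟩ := hq.additive A B hA hB hAB hdisj
    rw [hunion]
    exact hμ.additive (q A) (q B) (hq.image A hA) (hq.image B hB)
      (hunion ▸ hq.image (A ∪ B) hAB) hdisj'
  regular _ hU := hq.isLUB_pullback hμ hU

end IsImageTransformation

theorem IsSimpleQM.pullback {X Y : Type*} [TopologicalSpace X] [TopologicalSpace Y]
    {q : Set X → Set Y} {σ : Set Y → ℝ} (hq : IsImageTransformation q) (hσ : IsSimpleQM σ) :
    IsSimpleQM fun A => σ (q A) :=
  fun A hA => hσ (q A) (hq.image A hA)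

theorem imageTransformation_pullback_general {X Y Z : Type*} [TopologicalSpace X] [T2Space X]
    [TopologicalSpace Y] [T2Space Y] [TopologicalSpace Z]
    (q : Set X → Set Y) (hq : IsImageTransformation q) :
    (∀ μ : Set Y → ℝ, IsQuasiMeasure μ → IsQuasiMeasure (fun A : Set X => μ (q A))) ∧
    (∀ σ : Set Y → ℝ, IsQuasiMeasure σ → IsSimpleQM σ →
      IsSimpleQM (fun A : Set X => σ (q A))) ∧
    ∀ (p : Set Y → Set Z), IsImageTransformation p → ∀ (μ : Set Z → ℝ),
      (fun A : Set X => μ ((p ∘ q) A)) = fun A : Set X => (fun B : Set Y => μ (p B)) (q A) :=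
  ⟨fun _ hμ => hq.isQuasiMeasure_pullback hμ, fun _ _ hσ => hσ.pullback hq,
    fun _ _ _ => rfl⟩

/-- pullback of quasi-measures along image-transformations. -/
theorem imageTransformation_pullback {X Y Z : Type*} [TopologicalSpace X] [T2Space X]
    [TopologicalSpace Y] [T2Space Y] [TopologicalSpace Z] [T2Space Z]
    (q : Set X → Set Y) (hq : IsImageTransformation q) :
    (∀ μ : Set Y → ℝ, IsQuasiMeasure μ → IsQuasiMeasure (fun A : Set X => μ (q A))) ∧
    (∀ σ : Set Y → ℝ, IsQuasiMeasure σ → IsSimpleQM σ →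
      IsSimpleQM (fun A : Set X => σ (q A))) ∧
    ∀ (p : Set Y → Set Z), IsImageTransformation p → ∀ (μ : Set Z → ℝ),
      (fun A : Set X => μ ((p ∘ q) A)) = fun A : Set X => (fun B : Set Y => μ (p B)) (q A) :=
  imageTransformation_pullback_general q hq
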